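/- Consider the simplified point-force swimming model f^∘(E) := f̄(E)(|B|^{−1}1_B − δ_{x(E)}) with spherical particles I^∘ = B, and the shear strain E = (s/2)(e₁⊗e₂ + e₂⊗e₁). If the swimming direction and force-application point are aligned with the preferred orientation e = (e₁+e₂)/√2, namely f̄(E) = ±|f̄(E)|e and x(E) = ±γ|x(E)|e with γ ∈ {−1, +1}, then the first-order active effective viscosity satisfies E:B̄_act^{(1)}(E) = γ (s/2)|x(E)||f̄(E)|( 1 − ((d+2)/2)|x(E)|^{−d} + (d/2)|x(E)|^{−d−2} ); in particular, since |x(E)| > 1, this quantity is negative for pushers (γ = −1, i.e. the point force behind the particle) and positive for pullers (γ = +1), so pusher activity decreases the effective viscosity at first order in the dilution parameter. -/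

import Mathlib

/-!
Common setting for the formalization of results from
"Active suspensions in a steady Stokes flow" (homogenization of active rigid
particle suspensions).  We work in `ℝ^d` (as `EuclideanSpace ℝ (Fin d)`),
with random suspensions of rigid particles carrying swimming forces.
PDEs are formulated weakly (via test functions), surface integrals are
defined through Minkowski contents, and stationarity/ergodicity through a
measure-preserving `ℝ^d`-action on the probability space.
-/

open MeasureTheory Metric Set Filter Topology Pointwise
open scoped Matrix

noncomputable section

namespace ActiveSuspension

attribute [local instance] Matrix.normedAddCommGroup Matrix.normedSpace

abbrev sInfty : WithTop ℕ∞ := (⊤ : ℕ∞)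

abbrev Vec (d : ℕ) := EuclideanSpace ℝ (Fin d)
abbrev Mat (d : ℕ) := Matrix (Fin d) (Fin d) ℝ

variable {d : ℕ}

def vOf (f : Fin d → ℝ) : Vec d := (WithLp.equiv 2 (Fin d → ℝ)).symm f

/-- `i`-th standard basis vector of `ℝ^d`. -/
def e (d : ℕ) (i : Fin d) : Vec d := EuclideanSpace.single i (1 : ℝ)

def vDot (a b : Vec d) : ℝ := ∑ i, a i * b i

def mDot (A B : Mat d) : ℝ := ∑ i, ∑ j, A i j * B i j

def frobSq (A : Mat d) : ℝ := ∑ i, ∑ j, (A i j) ^ 2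

/-- Frobenius norm of a matrix. -/
def frob (A : Mat d) : ℝ := Real.sqrt (frobSq A)

/-- Japanese bracket `⟨E⟩ = (1+|E|²)^(1/2)` of a matrix. -/
def jap (A : Mat d) : ℝ := Real.sqrt (1 + frobSq A)

/-- Japanese bracket of a vector. -/
def japV (x : Vec d) : ℝ := Real.sqrt (1 + ‖x‖ ^ 2)

/-- Japanese bracket of a real number. -/
def japR (t : ℝ) : ℝ := Real.sqrt (1 + t ^ 2)

/-- Symmetric part of a matrix. -/
def symPart (A : Mat d) : Mat d := (2 : ℝ)⁻¹ • (A + Aᵀ)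

/-- The set `𝕄₀^sym` of symmetric trace-free matrices. -/
def SymTF (d : ℕ) : Set (Mat d) := {E | E.IsSymm ∧ E.trace = 0}

/-- The set `𝕄^skew` of skew-symmetric matrices. -/
def SkewM (d : ℕ) : Set (Mat d) := {Θ | Θᵀ = -Θ}

/-- Action of a matrix on a vector, `x ↦ Mx`. -/
def mApp (M : Mat d) (x : Vec d) : Vec d := vOf (M.mulVec fun i => x i)

/-! ### Pointwise differential operators -/

/-- Pointwise gradient `(∇u)_{ij} = ∂_j u_i`. -/
def grad (u : Vec d → Vec d) (x : Vec d) : Mat d :=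
  Matrix.of fun i j => fderiv ℝ u x (e d j) i

def gradS (P : Vec d → ℝ) (x : Vec d) : Vec d :=
  vOf fun i => fderiv ℝ P x (e d i)

/-- Symmetrized gradient `D(u) = (∇u + ∇uᵀ)/2`. -/
def Dsym (u : Vec d → Vec d) (x : Vec d) : Mat d := symPart (grad u x)

def divg (u : Vec d → Vec d) (x : Vec d) : ℝ := (grad u x).trace

def lap (u : Vec d → Vec d) (x : Vec d) : Vec d :=
  vOf fun i => ∑ j, fderiv ℝ (fun y => fderiv ℝ u y (e d j) i) x (e d j)

/-- Cauchy stress tensor `σ(u,P) = 2D(u) - P Id`. -/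
def stress (u : Vec d → Vec d) (P : Vec d → ℝ) (x : Vec d) : Mat d :=
  (2 : ℝ) • Dsym u x - P x • (1 : Mat d)

def IsTest (φ : Vec d → ℝ) : Prop := ContDiff ℝ sInfty φ ∧ HasCompactSupport φ

def IsTestV (v : Vec d → Vec d) : Prop := ContDiff ℝ sInfty v ∧ HasCompactSupport v

/-- `G` is the (matrix of the) distributional gradient of `u`, both being
locally integrable. -/
def HasWeakGradLoc (u : Vec d → Vec d) (G : Vec d → Mat d) : Prop :=
  LocallyIntegrable u volume ∧ (∀ i j, LocallyIntegrable (fun x => G x i j) volume) ∧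
    ∀ φ : Vec d → ℝ, IsTest φ → ∀ i j,
      ∫ x, u x i * fderiv ℝ φ x (e d j) = - ∫ x, G x i j * φ x

/-- Scalar version of `HasWeakGradLoc`. -/
def HasWeakGradSLoc (w : Vec d → ℝ) (g : Vec d → Vec d) : Prop :=
  LocallyIntegrable w volume ∧ (∀ j, LocallyIntegrable (fun x => g x j) volume) ∧
    ∀ φ : Vec d → ℝ, IsTest φ → ∀ j,
      ∫ x, w x * fderiv ℝ φ x (e d j) = - ∫ x, g x j * φ x

/-- Weak gradient relative to an open set `A`. -/
def HasWeakGradOn (u : Vec d → Vec d) (G : Vec d → Mat d) (A : Set (Vec d)) : Prop :=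
  IntegrableOn u A volume ∧ (∀ i j, IntegrableOn (fun x => G x i j) A volume) ∧
    ∀ φ : Vec d → ℝ, IsTest φ → tsupport φ ⊆ A → ∀ i j,
      ∫ x in A, u x i * fderiv ℝ φ x (e d j) = - ∫ x in A, G x i j * φ x

/-! ### Surface integrals (via Minkowski content) and normals -/

/-- Surface integral over `∂A`, defined as the Minkowski-content limit
`lim_{r↓0} (2r)⁻¹ ∫_{(∂A)_r} g`. For `C²` sets and continuous `g` this is the
usual surface integral. -/
def surfInt (A : Set (Vec d)) (g : Vec d → ℝ) : ℝ :=
  limUnder (𝓝[>] (0 : ℝ)) fun r => (2 * r)⁻¹ * ∫ x in thickening r (frontier A), g x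

/-- Signed distance to `∂A` (negative inside `A`). -/
def sdist (A : Set (Vec d)) (x : Vec d) : ℝ := infDist x A - infDist x Aᶜ

/-- Outward unit normal of a `C²` set, as the gradient of the signed distance. -/
def outNormal (A : Set (Vec d)) (x : Vec d) : Vec d := gradient (sdist A) x

/-- Normal traction `σ(u,P)ν` on `∂A`. -/
def traction (A : Set (Vec d)) (u : Vec d → Vec d) (P : Vec d → ℝ) (x : Vec d) : Vec d :=
  vOf fun i => ∑ j, stress u P x i j * outNormal A x j

/-- `i`-th component of `∫_{∂A} σ(u,P)ν`. -/
def tractionVec (A : Set (Vec d)) (u : Vec d → Vec d) (P : Vec d → ℝ) (i : Fin d) : ℝ :=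
  surfInt A fun x => traction A u P x i

/-- `∫_{∂A} g · σ(u,P)ν`. -/
def tractionDot (A : Set (Vec d)) (u : Vec d → Vec d) (P : Vec d → ℝ)
    (g : Vec d → Vec d) : ℝ :=
  surfInt A fun x => vDot (g x) (traction A u P x)

/-- `(i,k)` entry of `∫_{∂A} σ(u,P)ν ⊗ (x-c)`. -/
def stresslet (A : Set (Vec d)) (u : Vec d → Vec d) (P : Vec d → ℝ) (c : Vec d)
    (i k : Fin d) : ℝ :=
  surfInt A fun x => traction A u P x i * (x - c) k

/-- `(i,k)` entry of `∫_{∂A} σ(u,P)ν ⊗ₛ (x-c)`. -/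
def stressletSym (A : Set (Vec d)) (u : Vec d → Vec d) (P : Vec d → ℝ) (c : Vec d)
    (i k : Fin d) : ℝ :=
  (2 : ℝ)⁻¹ * (stresslet A u P c i k + stresslet A u P c k i)

/-! ### Domains -/

/-- Uniform interior cone condition (equivalent to the Lipschitz regularity of the
boundary for bounded open sets). -/
def UniformCone (U : Set (Vec d)) : Prop :=
  ∃ r > 0, ∀ z ∈ frontier U, ∃ v : Vec d, ‖v‖ = 1 ∧
    ∀ (t : ℝ) (w : Vec d), 0 < t → t < r → ‖w‖ < r → z + t • (v + w) ∈ U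

/-- A bounded (Lipschitz) domain. -/
structure IsDomain (U : Set (Vec d)) : Prop where
  isOpen : IsOpen U
  bounded : Bornology.IsBounded U
  nonempty : U.Nonempty
  lipschitz : UniformCone U

/-- Average `⨏_A g`. -/
def cellAvg (A : Set (Vec d)) (g : Vec d → ℝ) : ℝ :=
  ((volume A).toReal)⁻¹ * ∫ x in A, g x

/-- The cube `Q_L(c) = c + [-L/2, L/2)^d`. -/
def Qc (L : ℝ) (c : Vec d) : Set (Vec d) :=
  {y | ∀ i, c i - L / 2 ≤ y i ∧ y i < c i + L / 2}

/-! ### Random suspensions of rigid particles -/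

/-- Hypothesis 1.1 of the paper: a stationary ergodic random suspension of
uniformly `C²` (interior/exterior ball condition with radius `ϑ`) particles
`I_n = x_n + I_n^∘` with shapes contained in the unit ball, centered at their
barycenter, satisfying the hardcore condition with half interparticle
distance `ℓ`.  Stationarity and ergodicity are encoded through a
measure-preserving additive action `shift` of `ℝ^d`. -/
structure Suspension (d : ℕ) (Ω : Type*) [MeasureSpace Ω] where
  center : Ω → ℕ → Vec d
  shape : Ω → ℕ → Set (Vec d)
  ϑ : ℝ
  ℓ : ℝ
  shift : Vec d → Ω → Ω
  ϑ_pos : 0 < ϑ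
  ϑ_le : ϑ ≤ ℓ
  shape_sub : ∀ ω n, shape ω n ⊆ ball (0 : Vec d) 1
  shape_open : ∀ ω n, IsOpen (shape ω n)
  shape_conn : ∀ ω n, IsConnected (shape ω n)
  shape_bary : ∀ ω n, (∫ y in shape ω n, y) = (0 : Vec d)
  regular : ∀ᵐ ω ∂volume, ∀ n, ∀ z ∈ frontier (shape ω n),
      (∃ c, ball c ϑ ⊆ shape ω n ∧ z ∈ closure (ball c ϑ)) ∧
      (∃ c, ball c ϑ ∩ closure (shape ω n) = ∅ ∧ z ∈ closure (ball c ϑ))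
  hardcore : ∀ᵐ ω ∂volume, ∀ n m, n ≠ m → ∀ p ∈ shape ω n, ∀ q ∈ shape ω m,
      2 * ℓ ≤ dist (center ω n + p) (center ω m + q)
  shift_zero : ∀ ω, shift 0 ω = ω
  shift_add : ∀ x y ω, shift x (shift y ω) = shift (x + y) ω
  shift_meas : ∀ x, Measurable (shift x)
  shift_mp : ∀ x, MeasurePreserving (shift x) volume volume
  stationary : ∀ x ω,
      (⋃ n, (fun y => center (shift x ω) n + y) '' shape (shift x ω) n)
        = (fun y => y + x) ⁻¹' (⋃ n, (fun y => center ω n + y) '' shape ω n)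
  ergodic : ∀ A : Set Ω, MeasurableSet A → (∀ x, shift x ⁻¹' A = A) →
      volume A = 0 ∨ volume A = 1
  meas_incl : ∀ y : Vec d,
      MeasurableSet {ω | y ∈ ⋃ n, (fun z => center ω n + z) '' shape ω n}

variable {Ω : Type*} [MeasureSpace Ω]

/-- The particle `I_n = x_n + I_n^∘`. -/
def Suspension.particle (S : Suspension d Ω) (ω : Ω) (n : ℕ) : Set (Vec d) :=
  (fun y => S.center ω n + y) '' S.shape ω n

/-- The random set `𝓘 = ⋃ₙ Iₙ`. -/
def Suspension.inclusions (S : Suspension d Ω) (ω : Ω) : Set (Vec d) :=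
  ⋃ n, S.particle ω n

/-- The particle volume fraction `λ = 𝔼[1_𝓘]`. -/
def Suspension.vfrac (S : Suspension d Ω) : ℝ :=
  (volume {ω | (0 : Vec d) ∈ S.inclusions ω}).toReal

/-- Hypotheses 1.3/1.5: swimming forces `f_n(E)`, smooth and bounded in the
strain rate `E`, supported in `(I_n + B)`, extended affinely inside `I_n`,
neutral in force and torque, and jointly stationary with the suspension. -/
structure Swimming (S : Suspension d Ω) where
  f : Ω → ℕ → Mat d → Vec d → Vec d
  C : ℕ → ℝ
  C_pos : ∀ k, 0 < C k
  meas : ∀ n E, Measurable fun p : Ω × Vec d => f p.1 n E p.2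
  support : ∀ ω n E x, x ∉ thickening 1 (S.particle ω n) → f ω n E x = 0
  bound : ∀ᵐ ω ∂volume, ∀ n E x, ‖f ω n E x‖ ≤ C 0 * jap E
  smoothE : ∀ᵐ ω ∂volume, ∀ n x, ContDiff ℝ sInfty fun E => f ω n E x
  derivBound : ∀ᵐ ω ∂volume, ∀ n x E (k : ℕ), 1 ≤ k →
      ‖iteratedFDeriv ℝ k (fun E' => f ω n E' x) E‖ ≤ C k
  affineInside : ∀ ω n E, ∃ (A : Mat d) (b : Vec d),
      ∀ x ∈ S.particle ω n, f ω n E x = mApp A (x - S.center ω n) + b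
  neutralF : ∀ ω n E, (∫ x in thickening 1 (S.particle ω n), f ω n E x) = 0
  neutralT : ∀ ω n E, ∀ Θ ∈ SkewM d,
      (∫ x in thickening 1 (S.particle ω n),
        vDot (mApp Θ (x - S.center ω n)) (f ω n E x)) = 0
  statTotal : ∀ x ω E y, (∑' n, f (S.shift x ω) n E y) = ∑' n, f ω n E (y + x)

/-- A forcing: one force field per particle, per realization. -/
def Forcing (d : ℕ) (Ω : Type*) := Ω → ℕ → Vec d → Vec d

def Swimming.force {S : Suspension d Ω} (F : Swimming S) (E : Mat d) : Forcing d Ω :=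
  fun ω n x => F.f ω n E x

/-- Directional derivative `∂_{E'} f_n(E)` of the swimming forces. -/
def Swimming.dforce {S : Suspension d Ω} (F : Swimming S) (E E' : Mat d) : Forcing d Ω :=
  fun ω n x => fderiv ℝ (fun E0 => F.f ω n E0 x) E E'

/-- Second directional derivative `∂_{E',E''} f_n(E)`. -/
def Swimming.d2force {S : Suspension d Ω} (F : Swimming S) (E E' E'' : Mat d) :
    Forcing d Ω :=
  fun ω n x => fderiv ℝ (fun E0 => fderiv ℝ (fun E1 => F.f ω n E1 x) E0 E') E E''

/-! ### Convolution kernel and ε-rescaled active Stokes system -/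

/-- A smooth nonnegative kernel of unit mass (supported in the unit ball). -/
structure IsKernel (χ : Vec d → ℝ) : Prop where
  smooth : ContDiff ℝ sInfty χ
  nonneg : ∀ x, 0 ≤ χ x
  mass : (∫ x, χ x) = 1
  supp : ∀ x : Vec d, 1 ≤ ‖x‖ → χ x = 0

/-- Rescaled kernel `χ_δ = δ^{-d} χ(·/δ)`. -/
def resc (χ : Vec d → ℝ) (δ : ℝ) (x : Vec d) : ℝ := (δ⁻¹) ^ d * χ (δ⁻¹ • x)

/-- `χ_δ ∗ D(u)`, computed from the weak gradient `G` of `u`. -/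
def mollG (χ : Vec d → ℝ) (δ : ℝ) (G : Vec d → Mat d) (x : Vec d) : Mat d :=
  Matrix.of fun i j => ∫ y, resc χ δ (x - y) * symPart (G y) i j

/-- The retained indices `N_ε(U) = {n : ε(I_n + ℓB) ⊆ U}`. -/
def NepsSet (S : Suspension d Ω) (ω : Ω) (ε : ℝ) (U : Set (Vec d)) : Set ℕ :=
  {n | ε • thickening S.ℓ (S.particle ω n) ⊆ U}

/-- The rescaled suspension `𝓘_ε(U)`. -/
def IncEps (S : Suspension d Ω) (ω : Ω) (ε : ℝ) (U : Set (Vec d)) : Set (Vec d) :=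
  ⋃ n ∈ NepsSet S ω ε U, ε • S.particle ω n

/-- Rescaled swimming force `f_{n,ε}(E) = ε^{-d} f_n(·/ε, E)`. -/
def fnEps (S : Suspension d Ω) (F : Swimming S) (ε : ℝ) (ω : Ω) (n : ℕ)
    (E : Mat d) (x : Vec d) : Vec d :=
  (ε⁻¹) ^ d • F.f ω n E (ε⁻¹ • x)

/-- The locally averaged strain `⨏_{εI_n} χ_δ ∗ D(u)` felt by particle `n`,
computed from the weak gradient `G` of `u`. -/
def avgStrain (S : Suspension d Ω) (χ : Vec d → ℝ) (δ ε : ℝ) (ω : Ω)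
    (G : Vec d → Mat d) (n : ℕ) : Mat d :=
  Matrix.of fun i j => cellAvg (ε • S.particle ω n) fun x => mollG χ δ G x i j

/-- `v` is a rigid motion in a neighborhood of `A`. -/
def RigidNear (A : Set (Vec d)) (v : Vec d → Vec d) : Prop :=
  ∃ O, IsOpen O ∧ A ⊆ O ∧ ∀ x ∈ O, Dsym v x = 0

/-- Weak solution of the active Stokes system (1.9)/(1.13) in `U`, with swimming
forces evaluated at the strain produced by the (given) field with weak gradient
`Gin`; `WeakSol` below is the genuinely nonlinear case `Gin = G`.
All boundary conditions on the particles are incorporated in the variational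
formulation (tested against fields that are rigid near the particles), and the
Dirichlet condition through vanishing outside `U`.  The pressure is anchored
to have vanishing integral. -/
structure WeakSolGen (S : Suspension d Ω) (F : Swimming S) (U : Set (Vec d))
    (χ : Vec d → ℝ) (κ ε δ : ℝ) (h : Vec d → Vec d) (p : ENNReal) (ω : Ω)
    (Gin : Vec d → Mat d) (u : Vec d → Vec d) (G : Vec d → Mat d) (P : Vec d → ℝ) :
    Prop where
  weakGrad : HasWeakGradLoc u G
  uMem : MemLp u p (volume.restrict U)
  gMem : ∀ i j, MemLp (fun x => G x i j) p (volume.restrict U)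
  pMem : MemLp P p (volume.restrict (U \ IncEps S ω ε U))
  zero_out : ∀ᵐ x ∂volume, x ∉ U → u x = 0
  grad_out : ∀ᵐ x ∂volume, x ∉ U → G x = 0
  divfree : ∀ᵐ x ∂(volume.restrict U), (G x).trace = 0
  rigid : ∀ᵐ x ∂(volume.restrict (IncEps S ω ε U)), symPart (G x) = 0
  anchor : (∫ x in U \ IncEps S ω ε U, P x) = 0
  weakForm : ∀ v : Vec d → Vec d, IsTestV v → tsupport v ⊆ U →
    RigidNear (IncEps S ω ε U) v →
    (∫ x in U, mDot (G x) (grad v x))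
        - (∫ x in U \ IncEps S ω ε U, P x * divg v x)
      = (∫ x in U \ IncEps S ω ε U, vDot (h x) (v x))
        + (κ / ε) * ∑' n, Set.indicator (NepsSet S ω ε U)
            (fun m => ∫ x in ε • thickening 1 (S.particle ω m),
              vDot (fnEps S F ε ω m (avgStrain S χ δ ε ω Gin m) x) (v x)) n

/-- Weak solution of the (nonlinear) active Stokes system. -/
abbrev WeakSol (S : Suspension d Ω) (F : Swimming S) (U : Set (Vec d))
    (χ : Vec d → ℝ) (κ ε δ : ℝ) (h : Vec d → Vec d) (p : ENNReal) (ω : Ω)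
    (u : Vec d → Vec d) (G : Vec d → Mat d) (P : Vec d → ℝ) : Prop :=
  WeakSolGen S F U χ κ ε δ h p ω G u G P

/-! ### Correctors -/

/-- A random scalar field is stationary w.r.t. the group action. -/
def StatFieldR (S : Suspension d Ω) (g : Ω → Vec d → ℝ) : Prop :=
  ∀ x : Vec d, ∀ᵐ ω ∂volume,
    (fun y => g (S.shift x ω) y) =ᵐ[volume] fun y => g ω (y + x)

/-- The pressure extended by `0` inside the particles, `Π 1_{ℝ^d∖𝓘}`. -/
def fluidInd (S : Suspension d Ω) (Pr : Ω → Vec d → ℝ) (ω : Ω) (y : Vec d) : ℝ :=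
  Set.indicator (S.inclusions ω)ᶜ (Pr ω) y

/-- `Σₙ ∫_{Iₙ+B} g_n · v`. -/
def forcingSum (S : Suspension d Ω) (g : Forcing d Ω) (ω : Ω) (v : Vec d → Vec d) : ℝ :=
  ∑' n, ∫ x in thickening 1 (S.particle ω n), vDot (g ω n x) (v x)

/-- The passive corrector `(ψ_E, Σ_E)` of Lemma 2.1. -/
structure PassiveCorrector (S : Suspension d Ω) (E : Mat d)
    (ψ : Ω → Vec d → Vec d) (G : Ω → Vec d → Mat d) (Sg : Ω → Vec d → ℝ) : Prop where
  weakGrad : ∀ᵐ ω ∂volume, HasWeakGradLoc (ψ ω) (G ω)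
  pressLoc : ∀ᵐ ω ∂volume, LocallyIntegrable (fluidInd S Sg ω) volume
  divfree : ∀ᵐ ω ∂volume, ∀ᵐ x ∂(volume.restrict (S.inclusions ω)ᶜ), (G ω x).trace = 0
  rigid : ∀ᵐ ω ∂volume, ∀ᵐ x ∂(volume.restrict (S.inclusions ω)),
      symPart (G ω x) + E = 0
  weakForm : ∀ᵐ ω ∂volume, ∀ v, IsTestV v → RigidNear (S.inclusions ω) v →
      (∫ x, 2 * mDot (symPart (G ω x) + E) (Dsym v x))
        - (∫ x in (S.inclusions ω)ᶜ, Sg ω x * divg v x) = 0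
  gradStat : ∀ i j, StatFieldR S fun ω y => G ω y i j
  presStat : StatFieldR S (fluidInd S Sg)
  gradMean : ∀ i j, (∫ ω, G ω 0 i j) = 0
  presMean : (∫ ω, fluidInd S Sg ω 0) = 0
  gradL2 : Integrable (fun ω => frobSq (G ω 0)) volume
  presL2 : Integrable (fun ω => (fluidInd S Sg ω 0) ^ 2) volume
  anchor : ∀ᵐ ω ∂volume, (∫ y in ball (0 : Vec d) 1, ψ ω y) = 0

/-- The active corrector `(φ, Π)` (Lemma 2.3 / eq. (2.4)), for a general
forcing `g` (to accommodate the linearized correctors 𝔡φ, 𝔡²φ). -/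
structure ActiveCorrector (S : Suspension d Ω) (g : Forcing d Ω)
    (φ : Ω → Vec d → Vec d) (G : Ω → Vec d → Mat d) (Pr : Ω → Vec d → ℝ) : Prop where
  weakGrad : ∀ᵐ ω ∂volume, HasWeakGradLoc (φ ω) (G ω)
  pressLoc : ∀ᵐ ω ∂volume, LocallyIntegrable (fluidInd S Pr ω) volume
  divfree : ∀ᵐ ω ∂volume, ∀ᵐ x ∂(volume.restrict (S.inclusions ω)ᶜ), (G ω x).trace = 0
  rigid : ∀ᵐ ω ∂volume, ∀ᵐ x ∂(volume.restrict (S.inclusions ω)), symPart (G ω x) = 0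
  weakForm : ∀ᵐ ω ∂volume, ∀ v, IsTestV v → RigidNear (S.inclusions ω) v →
      (∫ x, 2 * mDot (symPart (G ω x)) (Dsym v x))
        - (∫ x in (S.inclusions ω)ᶜ, Pr ω x * divg v x) = forcingSum S g ω v
  gradStat : ∀ i j, StatFieldR S fun ω y => G ω y i j
  presStat : StatFieldR S (fluidInd S Pr)
  gradMean : ∀ i j, (∫ ω, G ω 0 i j) = 0
  presMean : (∫ ω, fluidInd S Pr ω 0) = 0
  gradL2 : Integrable (fun ω => frobSq (G ω 0)) volume
  presL2 : Integrable (fun ω => (fluidInd S Pr ω 0) ^ 2) volume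
  anchor : ∀ᵐ ω ∂volume, (∫ y in ball (0 : Vec d) 1, φ ω y) = 0

/-- The auxiliary corrector `γ` of Lemma 2.5, `-Δγ = Σₙ gₙ`. -/
structure GammaCorrector (S : Suspension d Ω) (g : Forcing d Ω)
    (γ : Ω → Vec d → Vec d) (G : Ω → Vec d → Mat d) : Prop where
  weakGrad : ∀ᵐ ω ∂volume, HasWeakGradLoc (γ ω) (G ω)
  weakForm : ∀ᵐ ω ∂volume, ∀ v, IsTestV v →
      (∫ x, mDot (G ω x) (grad v x)) = forcingSum S g ω v
  gradStat : ∀ i j, StatFieldR S fun ω y => G ω y i j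
  gradMean : ∀ i j, (∫ ω, G ω 0 i j) = 0
  gradL2 : Integrable (fun ω => frobSq (G ω 0)) volume
  anchor : ∀ᵐ ω ∂volume, (∫ y in ball (0 : Vec d) 1, γ ω y) = 0

/-- The extended flux `K` of Lemma 2.6: a stationary symmetric 2-tensor field
agreeing with `σ(φ,Π)` in the fluid and with `div K = -Σₙ gₙ` (weakly). -/
structure FluxK (S : Suspension d Ω) (g : Forcing d Ω)
    (Gφ : Ω → Vec d → Mat d) (Pr : Ω → Vec d → ℝ) (K : Ω → Vec d → Mat d) : Prop where
  isSymm : ∀ᵐ ω ∂volume, ∀ᵐ x ∂volume, (K ω x).IsSymm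
  locInt : ∀ᵐ ω ∂volume, ∀ i j, LocallyIntegrable (fun x => K ω x i j) volume
  statK : ∀ i j, StatFieldR S fun ω y => K ω y i j
  sqInt : Integrable (fun ω => frobSq (K ω 0)) volume
  eqFluid : ∀ᵐ ω ∂volume, ∀ᵐ x ∂(volume.restrict (S.inclusions ω)ᶜ),
      K ω x = (2 : ℝ) • symPart (Gφ ω x) - Pr ω x • (1 : Mat d)
  weakDiv : ∀ᵐ ω ∂volume, ∀ v, IsTestV v →
      (∫ x, mDot (K ω x) (grad v x)) = forcingSum S g ω v

/-- Expectation of a stationary matrix field (evaluated at the origin). -/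
def expMat (K : Ω → Vec d → Mat d) : Mat d :=
  Matrix.of fun i j => ∫ ω, K ω 0 i j

/-- The flux corrector `θ` of Lemma 2.6, solving `-Δθ_{ijk} = ∂_j L_{ik} - ∂_k L_{ij}`
weakly, with stationary mean-zero gradient and anchoring. -/
structure ThetaCorrector (S : Suspension d Ω) (L : Ω → Vec d → Mat d)
    (θ : Ω → Vec d → Fin d → Fin d → Fin d → ℝ)
    (Gθ : Ω → Vec d → Fin d → Fin d → Fin d → Vec d) : Prop where
  weakGrad : ∀ᵐ ω ∂volume, ∀ i j k,
      HasWeakGradSLoc (fun x => θ ω x i j k) (fun x => Gθ ω x i j k)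
  eqn : ∀ᵐ ω ∂volume, ∀ φt, IsTest φt → ∀ i j k,
      (∫ x, vDot (Gθ ω x i j k) (gradS φt x))
        = - (∫ x, L ω x i k * fderiv ℝ φt x (e d j))
          + (∫ x, L ω x i j * fderiv ℝ φt x (e d k))
  gradStat : ∀ i j k l, StatFieldR S fun ω y => Gθ ω y i j k l
  gradMean : ∀ i j k l, (∫ ω, Gθ ω 0 i j k l) = 0
  gradL2 : ∀ i j k, Integrable (fun ω => ‖Gθ ω 0 i j k‖ ^ 2) volume
  anchor : ∀ᵐ ω ∂volume, ∀ i j k, cellAvg (ball (0 : Vec d) 1) (fun x => θ ω x i j k) = 0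

/-! ### Effective tensors -/

/-- `𝔼[Σₙ (1_{Iₙ}/|Iₙ|) gₙ]` (as a stationary density, evaluated at the origin). -/
def expDensity (S : Suspension d Ω) (g : Ω → ℕ → ℝ) : ℝ :=
  ∫ ω, ∑' n, Set.indicator (S.particle ω n)
      (fun _ => ((volume (S.particle ω n)).toReal)⁻¹ * g ω n) 0

/-- Definition of the passive effective viscosity `B̄_pas` and of `b̄`
(first display in Theorem 1 of the paper). -/
def PassiveTensorsDef (S : Suspension d Ω)
    (ψ : Mat d → Ω → Vec d → Vec d) (Sg : Mat d → Ω → Vec d → ℝ)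
    (Bpas : Mat d → Mat d) (bb : Mat d) : Prop :=
  ∀ E ∈ SymTF d, Bpas E ∈ SymTF d ∧ ∀ i k : Fin d,
    2 * (Bpas E i k - E i k) + mDot bb E * (if i = k then 1 else 0)
      = expDensity S fun ω n =>
          stressletSym (S.particle ω n) (fun x => ψ E ω x + mApp E x) (Sg E ω)
            (S.center ω n) i k

/-- Definition of `C̄`, `c̄` (eq. (1.18)) and `F̄` (eq. (1.19)). -/
def ActiveTensorsDef (S : Suspension d Ω) (F : Swimming S)
    (φ : Mat d → Ω → Vec d → Vec d) (Pr : Mat d → Ω → Vec d → ℝ)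
    (Cb : Mat d → Mat d) (cb : Mat d → ℝ) (Fb : Mat d → Mat d) : Prop :=
  ∀ E ∈ SymTF d, Cb E ∈ SymTF d ∧ Fb E ∈ SymTF d ∧
    (∀ i k : Fin d, 2 * Cb E i k + cb E * (if i = k then 1 else 0)
      = expDensity S fun ω n =>
          stressletSym (S.particle ω n) (φ E ω) (Pr E ω) (S.center ω n) i k) ∧
    (∀ E' ∈ SymTF d, mDot E' (Fb E)
      = - expDensity S fun ω n =>
          ∫ x in thickening 1 (S.particle ω n),
            vDot (mApp E' (x - S.center ω n)) (F.f ω n E x))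

/-- The active effective viscosity `B̄_act = C̄ + F̄/2`. -/
def BactOf (Cb Fb : Mat d → Mat d) (E : Mat d) : Mat d := Cb E + (2 : ℝ)⁻¹ • Fb E

/-- Weak solution of a homogenized (generally nonlinear, non-Newtonian) Stokes
system `-div(stressMap(∇u)) + ∇P = (1-λ)h`, `div u = 0`, `u|_{∂U} = 0`. -/
structure HomogSol (U : Set (Vec d)) (lam : ℝ)
    (stressMap : (Vec d → Mat d) → Vec d → Mat d) (h : Vec d → Vec d)
    (u : Vec d → Vec d) (G : Vec d → Mat d) (P : Vec d → ℝ) : Prop where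
  weakGrad : HasWeakGradLoc u G
  uMem : MemLp u 2 (volume.restrict U)
  gMem : ∀ i j, MemLp (fun x => G x i j) 2 (volume.restrict U)
  pMem : MemLp P 2 (volume.restrict U)
  zero_out : ∀ᵐ x ∂volume, x ∉ U → u x = 0
  grad_out : ∀ᵐ x ∂volume, x ∉ U → G x = 0
  divfree : ∀ᵐ x ∂(volume.restrict U), (G x).trace = 0
  anchor : (∫ x in U, P x) = 0
  weakForm : ∀ v, IsTestV v → tsupport v ⊆ U →
      (∫ x in U, mDot (stressMap G x) (grad v x)) - (∫ x in U, P x * divg v x)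
        = ∫ x in U, (1 - lam) * vDot (h x) (v x)

/-! ### Quantitative mixing and large-strain hypotheses -/

/-- The values of `g` on configurations agreeing with `𝓘(ω)` outside `B_t(x)`. -/
def oscSet (S : Suspension d Ω) (g : Set (Vec d) → ℝ) (x : Vec d) (t : ℝ) (ω : Ω) :
    Set ℝ :=
  {a | ∃ ω', S.inclusions ω' ∩ (ball x t)ᶜ = S.inclusions ω ∩ (ball x t)ᶜ ∧
        a = g (S.inclusions ω')}

/-- The oscillation `∂^osc_{𝓘, B_t(x)} g(𝓘)`. -/
def oscillation (S : Suspension d Ω) (g : Set (Vec d) → ℝ) (x : Vec d) (t : ℝ) (ω : Ω) :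
    ℝ :=
  sSup (oscSet S g x t ω) - sInf (oscSet S g x t ω)

/-- Hypothesis 1.2: the multiscale variance inequality with weight `π` of
superalgebraic decay. -/
def MixingHyp (S : Suspension d Ω) (π : ℝ → ℝ) : Prop :=
  (∀ t, 0 ≤ π t) ∧ (∀ s t : ℝ, 0 ≤ s → s ≤ t → π t ≤ π s) ∧
  (∀ p : ℕ, ∃ Cp : ℝ, ∀ t : ℝ, 0 ≤ t → π t ≤ Cp * (1 + t) ^ (-(p : ℝ))) ∧
  ∀ g : Set (Vec d) → ℝ, Measurable (fun ω => g (S.inclusions ω)) →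
    (∫ ω, (g (S.inclusions ω) - ∫ ω', g (S.inclusions ω')) ^ 2)
      ≤ ∫ ω, ∫ t in Ioi (0 : ℝ),
          (∫ x : Vec d, (oscillation S g x t ω) ^ 2) * ((japR t) ^ (-(d : ℝ)) * π t)

/-- Hypothesis 1.4: for large strain rates the swimming force becomes a
deterministic direction field `f^∞` times a random strength. -/
def LargeStrain (S : Suspension d Ω) (F : Swimming S) (γ : ℝ) (Cls : ℕ → ℝ) : Prop :=
  0 < γ ∧ ∃ finf : Mat d → Vec d, ∃ Str : Ω → ℕ → Vec d → ℝ,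
    (∀ᵐ ω ∂volume, ∀ n x E,
        ‖F.f ω n E x - Str ω n x • finf E‖ ≤ Cls 0 * jap E ^ (1 - γ)) ∧
    (∀ᵐ ω ∂volume, ∀ n x E (k : ℕ), 1 ≤ k →
        ‖iteratedFDeriv ℝ k (fun E' => F.f ω n E' x - Str ω n x • finf E') E‖
          ≤ Cls k * jap E ^ (-γ))

/-! ### Single-particle (dilute) problems -/

/-- The single-particle whole-space Stokes problem (1.27) around the rigid
inclusion `A` with strain rate `E` at infinity: `(ψ, Σ)` is a decaying
finite-energy Stokes solution outside `A`, `ψ + Ex` is rigid in `A`, and the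
particle is force- and torque-free. -/
structure SingleSol (A : Set (Vec d)) (E : Mat d)
    (ψ : Vec d → Vec d) (Sg : Vec d → ℝ) : Prop where
  contPsi : Continuous ψ
  reg : ∀ x ∈ (closure A)ᶜ, ContDiffAt ℝ 2 ψ x ∧ DifferentiableAt ℝ Sg x
  stokes : ∀ x ∈ (closure A)ᶜ, -(lap ψ x) + gradS Sg x = 0 ∧ divg ψ x = 0
  rigid : ∀ x ∈ A, Dsym (fun y => ψ y + mApp E y) x = 0
  decay : Tendsto (fun x => ‖ψ x‖) (cocompact (Vec d)) (𝓝 0)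
  energy : IntegrableOn (fun x => frobSq (grad ψ x)) (closure A)ᶜ volume
  forceFree : ∀ i, tractionVec A (fun x => ψ x + mApp E x) Sg i = 0
  torqueFree : ∀ Θ ∈ SkewM d,
      tractionDot A (fun x => ψ x + mApp E x) Sg (fun x => mApp Θ x) = 0

/-! ### Marked (iid) structure, point process intensities, mixing -/

/-- Independence assumption (a) of Theorem 3: shapes and swimming forces are
iid copies (encoded through iid marks), independent of the point process. -/
structure MarkedIID {M : Type*} [MeasurableSpace M] (S : Suspension d Ω)
    (F : Swimming S) (mark : Ω → ℕ → M) (shapeOf : M → Set (Vec d))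
    (forceOf : M → Mat d → Vec d → Vec d) : Prop where
  meas : ∀ n, Measurable fun ω => mark ω n
  indep : ProbabilityTheory.iIndepFun
      (fun n ω => mark ω n) volume
  ident : ∀ n m, ProbabilityTheory.IdentDistrib (fun ω => mark ω n)
      (fun ω => mark ω m) volume volume
  indepPP : ProbabilityTheory.IndepFun (fun ω => mark ω) (fun ω => S.center ω) volume
  shapeEq : ∀ ω n, S.shape ω n = shapeOf (mark ω n)
  forceEq : ∀ ω n E x, F.f ω n E x = forceOf (mark ω n) E (x - S.center ω n)

/-- Number of points of the process in `A`. -/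
def ptsIn (S : Suspension d Ω) (ω : Ω) (A : Set (Vec d)) : ℝ :=
  ∑' n, Set.indicator A (fun _ => (1 : ℝ)) (S.center ω n)

/-- The one-point intensity `λ₁ = 𝔼[#{n : xₙ ∈ Q}]`. -/
def lam1 (S : Suspension d Ω) : ℝ := ∫ ω, ptsIn S ω (Qc 1 0)

def pairCount (S : Suspension d Ω) (ω : Ω) (A B : Set (Vec d)) : ℝ :=
  ∑' n, ∑' m, if n = m then 0 else
    Set.indicator A (fun _ => (1 : ℝ)) (S.center ω n)
      * Set.indicator B (fun _ => (1 : ℝ)) (S.center ω m)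

def tripleCount (S : Suspension d Ω) (ω : Ω) (A B Cs : Set (Vec d)) : ℝ :=
  ∑' n₀, ∑' n₁, ∑' n₂, if n₀ = n₁ ∨ n₀ = n₂ ∨ n₁ = n₂ then 0 else
    Set.indicator A (fun _ => (1 : ℝ)) (S.center ω n₀)
      * Set.indicator B (fun _ => (1 : ℝ)) (S.center ω n₁)
      * Set.indicator Cs (fun _ => (1 : ℝ)) (S.center ω n₂)

/-- `λ₂` dominates the two-point intensity. -/
def Lam2Bound (S : Suspension d Ω) (lam2 : ℝ) : Prop :=
  0 ≤ lam2 ∧ ∀ x : Vec d, (∫ ω, pairCount S ω (Qc S.ℓ 0) (Qc S.ℓ x)) ≤ lam2 * S.ℓ ^ (2 * d)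

/-- `λ₃` dominates the three-point intensity. -/
def Lam3Bound (S : Suspension d Ω) (lam3 : ℝ) : Prop :=
  0 ≤ lam3 ∧ ∀ x₁ x₂ : Vec d,
    (∫ ω, tripleCount S ω (Qc S.ℓ 0) (Qc S.ℓ x₁) (Qc S.ℓ x₂)) ≤ lam3 * S.ℓ ^ (3 * d)

/-- Defining property (1.24) of the two-point density `g₂`. -/
def IsG2 (S : Suspension d Ω) (g2 : Vec d → Vec d → ℝ) : Prop :=
  ∀ ζ : Vec d → Vec d → ℝ, Continuous (fun p : Vec d × Vec d => ζ p.1 p.2) →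
    HasCompactSupport (fun p : Vec d × Vec d => ζ p.1 p.2) →
    (∫ x, ∫ y, ζ x y * g2 x y)
      = ∫ ω, ∑' n, ∑' m, if n = m then 0 else ζ (S.center ω n) (S.center ω m)

/-- Defining property of the three-point density `g₃`. -/
def IsG3 (S : Suspension d Ω) (g3 : Vec d → Vec d → Vec d → ℝ) : Prop :=
  ∀ ζ : Vec d → Vec d → Vec d → ℝ,
    Continuous (fun p : Vec d × Vec d × Vec d => ζ p.1 p.2.1 p.2.2) →
    HasCompactSupport (fun p : Vec d × Vec d × Vec d => ζ p.1 p.2.1 p.2.2) →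
    (∫ x, ∫ y, ∫ z, ζ x y z * g3 x y z)
      = ∫ ω, ∑' n₀, ∑' n₁, ∑' n₂, if n₀ = n₁ ∨ n₀ = n₂ ∨ n₁ = n₂ then 0 else
          ζ (S.center ω n₀) (S.center ω n₁) (S.center ω n₂)

/-- Strong mixing of the point process (w.r.t. spatial shifts). -/
def StrongMixing (S : Suspension d Ω) : Prop :=
  ∀ A B : Set Ω, MeasurableSet A → MeasurableSet B →
    Tendsto (fun x : Vec d => (volume (A ∩ S.shift x ⁻¹' B)).toReal)
      (cocompact (Vec d)) (𝓝 ((volume A).toReal * (volume B).toReal))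

/-! ### Periodized setting -/

def PeriodicF (L : ℝ) (u : Vec d → Vec d) : Prop := ∀ x i, u (x + L • e d i) = u x
def PeriodicS (L : ℝ) (P : Vec d → ℝ) : Prop := ∀ x i, P (x + L • e d i) = P x
def PeriodicM (L : ℝ) (G : Vec d → Mat d) : Prop := ∀ x i, G (x + L • e d i) = G x

/-- Indices retained by the `L`-periodization. -/
def NLset (S : Suspension d Ω) (ω : Ω) (L : ℝ) : Set ℕ :=
  {n | S.center ω n ∈ Qc (L - 4) 0}

/-- The periodized random suspension `𝓘_L` (in the fundamental cell). -/
def IncL (S : Suspension d Ω) (ω : Ω) (L : ℝ) : Set (Vec d) :=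
  ⋃ n ∈ NLset S ω L, S.particle ω n

/-- An `L`-periodic passive corrector/solution around an obstacle `Obst`
(the full periodized suspension, or a single particle), cf. (4.2)/(4.5). -/
structure PerPassive (L : ℝ) (Obst : Set (Vec d)) (E : Mat d)
    (ψ : Vec d → Vec d) (G : Vec d → Mat d) (Sg : Vec d → ℝ) : Prop where
  per : PeriodicF L ψ
  perG : PeriodicM L G
  perS : PeriodicS L Sg
  weakGrad : HasWeakGradLoc ψ G
  energyFin : IntegrableOn (fun x => frobSq (G x)) (Qc L 0) volume
  divfree : ∀ᵐ x ∂(volume.restrict (Qc L 0 \ Obst)), (G x).trace = 0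
  rigid : ∀ᵐ x ∂(volume.restrict Obst), symPart (G x) + E = 0
  weakForm : ∀ v : Vec d → Vec d, ContDiff ℝ sInfty v → PeriodicF L v →
      RigidNear Obst v →
      (∫ x in Qc L 0, 2 * mDot (symPart (G x) + E) (Dsym v x))
        - (∫ x in Qc L 0 \ Obst, Sg x * divg v x) = 0

/-- The `L`-periodic active corrector `(φ_{E;L}, Π_{E;L})` of Section 4. -/
structure PerActive (S : Suspension d Ω) (F : Swimming S) (ω : Ω) (L : ℝ) (E : Mat d)
    (φ : Vec d → Vec d) (G : Vec d → Mat d) (Pr : Vec d → ℝ) : Prop where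
  per : PeriodicF L φ
  perG : PeriodicM L G
  perS : PeriodicS L Pr
  weakGrad : HasWeakGradLoc φ G
  energyFin : IntegrableOn (fun x => frobSq (G x)) (Qc L 0) volume
  divfree : ∀ᵐ x ∂(volume.restrict (Qc L 0 \ IncL S ω L)), (G x).trace = 0
  rigid : ∀ᵐ x ∂(volume.restrict (IncL S ω L)), symPart (G x) = 0
  weakForm : ∀ v : Vec d → Vec d, ContDiff ℝ sInfty v → PeriodicF L v →
      RigidNear (IncL S ω L) v →
      (∫ x in Qc L 0, 2 * mDot (symPart (G x)) (Dsym v x))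
        - (∫ x in Qc L 0 \ IncL S ω L, Pr x * divg v x)
      = ∑' n, Set.indicator (NLset S ω L)
          (fun m => ∫ x in thickening 1 (S.particle ω m), vDot (F.f ω m E x) (v x)) n

/-- The subspace `𝕄₀^sym` of symmetric trace-free matrices, as a submodule. -/
def STFsub (d : ℕ) : Submodule ℝ (Mat d) where
  carrier := SymTF d
  add_mem' := by
    rintro A B ⟨hA1, hA2⟩ ⟨hB1, hB2⟩
    constructor
    · show (A + B)ᵀ = A + B
      rw [Matrix.transpose_add, show Aᵀ = A from hA1, show Bᵀ = B from hB1]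
    · simp [Matrix.trace_add, hA2, hB2]
  zero_mem' := by
    constructor
    · show (0 : Mat d)ᵀ = 0
      simp
    · simp
  smul_mem' := by
    rintro c A ⟨hA1, hA2⟩
    constructor
    · show (c • A)ᵀ = c • A
      rw [Matrix.transpose_smul, show Aᵀ = A from hA1]
    · simp [Matrix.trace_smul, hA2]

end ActiveSuspension

namespace ActiveSuspension


lemma statement_19_auxpos (d : ℕ) (hd : 2 ≤ d) (u : ℝ) (hu0 : 0 < u) (hu1 : u < 1) :
    0 < 2 - ((d:ℝ)+2) * u ^ d + (d:ℝ) * u ^ (d+2) := by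
  set S := ∑ k ∈ Finset.range d, u ^ k with hSdef
  have hgeom : (1 - u) * S = 1 - u ^ d := by
    have h := geom_sum_mul u d
    have : S * (u - 1) = u ^ d - 1 := h
    nlinarith [this]
  have hSlb : (d : ℝ) * u ^ (d-1) ≤ S := by
    calc (d:ℝ) * u ^ (d-1) = ∑ _k ∈ Finset.range d, u^(d-1) := by
          simp [Finset.sum_const]
    _ ≤ S := Finset.sum_le_sum fun k hk =>
        pow_le_pow_of_le_one hu0.le hu1.le (by
          have := Finset.mem_range.mp hk; omega)
  have hpow : 0 < u ^ (d-1) := pow_pos hu0 _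
  have hud : u ^ d = u ^ (d-1) * u := by
    rw [← pow_succ]; congr 1; omega
  have hud2 : u ^ (d+2) = u ^ (d-1) * u * u * u := by
    rw [← pow_succ, ← pow_succ, ← pow_succ]; congr 1; omega
  have hd0 : (0:ℝ) < d := by positivity
  have key : 2 - ((d:ℝ)+2) * u ^ d + (d:ℝ) * u ^ (d+2)
      = 2*(1-u)*S - (d:ℝ)*u^d + (d:ℝ)*u^(d+2) := by
    linear_combination (-2) * hgeom
  have lower : 2*(1-u)*((d:ℝ)*u^(d-1)) ≤ 2*(1-u)*S :=
    mul_le_mul_of_nonneg_left hSlb (by linarith)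
  have hsq : u*u < 1 := by nlinarith
  have h2u : (0:ℝ) < 2 - u - u^2 := by nlinarith
  have hcube : (0:ℝ) < 2 - 3*u + u^3 := by
    nlinarith [mul_pos (sub_pos.mpr hu1) h2u]
  have final : 0 < 2*(1-u)*((d:ℝ)*u^(d-1)) - (d:ℝ)*u^d + (d:ℝ)*u^(d+2) := by
    rw [hud, hud2]
    have : 2*(1-u)*((d:ℝ)*u^(d-1)) - (d:ℝ)*(u^(d-1)*u) + (d:ℝ)*(u^(d-1)*u*u*u)
        = (d:ℝ)*u^(d-1)*(2 - 3*u + u^3) := by ring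
    rw [this]
    positivity
  linarith

/-- Simplified point-force swimming model with spherical
particles: for the shear strain `E = (s/2)(e₁⊗e₂ + e₂⊗e₁)`, with the swimming
direction `f̄(E)` and the force-application point `x(E)` aligned with the
preferred orientation `e = (e₁+e₂)/√2` (namely `f̄(E) = ±|f̄(E)|e` and
`x(E) = ±γ|x(E)|e`, `γ = ∓1` for pushers/pullers), the first-order active
effective viscosity
`E:B̄_act^{(1)}(E) = (s/2)(1-|x(E)|^{-(d+2)})(x(E)₁f̄(E)₂ + x(E)₂f̄(E)₁)
  - s((d+2)/2)(1-|x(E)|^{-2})(x(E)₁x(E)₂/|x(E)|^{d+2}) x(E)·f̄(E)`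
equals `γ(s/2)|x(E)||f̄(E)|(1 - ((d+2)/2)|x(E)|^{-d} + (d/2)|x(E)|^{-(d+2)})`;
in particular (since `|x(E)| > 1`) it is negative for pushers (`γ = -1`) and
positive for pullers (`γ = 1`): pusher activity decreases the effective
viscosity at first order in the dilution parameter. -/
theorem statement_19 {d : ℕ} (hd : 2 ≤ d) (s : ℝ) (hs : 0 < s)
    (fb xE : Vec d) (hfb : fb ≠ 0) (hxE : 1 < ‖xE‖)
    (γ σ : ℝ) (hγ : γ = 1 ∨ γ = -1) (hσ : σ = 1 ∨ σ = -1)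
    (ee : Vec d)
    (hee : ee = (Real.sqrt 2)⁻¹ • (e d ⟨0, by omega⟩ + e d ⟨1, by omega⟩))
    (halignf : fb = (σ * ‖fb‖) • ee)
    (halignx : xE = (σ * γ * ‖xE‖) • ee)
    (EBact : ℝ)
    (hEB : EBact
      = (s / 2) * (1 - ‖xE‖ ^ (-(d : ℝ) - 2))
          * (xE ⟨0, by omega⟩ * fb ⟨1, by omega⟩ + xE ⟨1, by omega⟩ * fb ⟨0, by omega⟩)
        - s * (((d : ℝ) + 2) / 2) * (1 - ‖xE‖ ^ (-2 : ℝ))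
          * (xE ⟨0, by omega⟩ * xE ⟨1, by omega⟩) * ‖xE‖ ^ (-(d : ℝ) - 2)
          * vDot xE fb) :
    EBact = γ * (s / 2) * ‖xE‖ * ‖fb‖
        * (1 - (((d : ℝ) + 2) / 2) * ‖xE‖ ^ (-(d : ℝ))
            + ((d : ℝ) / 2) * ‖xE‖ ^ (-(d : ℝ) - 2)) ∧
      (γ = -1 → EBact < 0) ∧ (γ = 1 → 0 < EBact) := by
  have hd0 : 0 < d := by omega
  set j0 : Fin d := ⟨0, by omega⟩ with hj0
  set j1 : Fin d := ⟨1, by omega⟩ with hj1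
  have hne : j0 ≠ j1 := by simp [hj0, hj1, Fin.ext_iff]
  set r := ‖xE‖ with hr
  set f := ‖fb‖ with hf
  have hr0 : (0:ℝ) < r := by linarith
  have hf0 : (0:ℝ) < f := norm_pos_iff.mpr hfb
  have hσσ : σ * σ = 1 := by rcases hσ with h | h <;> rw [h] <;> norm_num
  have hγγ : γ * γ = 1 := by rcases hγ with h | h <;> rw [h] <;> norm_num
  have hs2 : Real.sqrt 2 * Real.sqrt 2 = 2 := Real.mul_self_sqrt (by norm_num)
  have hinv2 : (Real.sqrt 2)⁻¹ * (Real.sqrt 2)⁻¹ = 2⁻¹ := by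
    rw [← mul_inv, hs2]
  have hee_apply : ∀ i : Fin d,
      ee i = (Real.sqrt 2)⁻¹ * ((if i = j0 then 1 else 0) + (if i = j1 then 1 else 0)) := by
    intro i
    rw [hee]
    simp [e, EuclideanSpace.single_apply, PiLp.smul_apply, PiLp.add_apply, hj0, hj1,
      smul_eq_mul, mul_add, mul_ite, mul_one, mul_zero]
  have heesq : ∀ i : Fin d, ee i * ee i
      = (if i = j0 then (2:ℝ)⁻¹ else 0) + (if i = j1 then (2:ℝ)⁻¹ else 0) := by
    intro i
    rw [hee_apply]
    by_cases h0 : i = j0 <;> by_cases h1 : i = j1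
    · exact absurd (h0.symm.trans h1) hne
    · simp only [if_pos h0, if_neg h1, add_zero, mul_one]
      exact hinv2
    · simp only [if_neg h0, if_pos h1, zero_add, mul_one]
      exact hinv2
    · simp [h0, h1]
  have hsum : (∑ i, ee i * ee i) = 1 := by
    rw [Finset.sum_congr rfl fun i _ => heesq i, Finset.sum_add_distrib]
    simp [Finset.sum_ite_eq']
    norm_num
  have hxE_i : ∀ i, xE i = σ * γ * r * ee i := by
    intro i
    rw [halignx]
    simp [PiLp.smul_apply, smul_eq_mul]
  have hfb_i : ∀ i, fb i = σ * f * ee i := by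
    intro i
    rw [halignf]
    simp [PiLp.smul_apply, smul_eq_mul]
  have hvdot : vDot xE fb = γ * (r * f) := by
    have : ∀ i : Fin d, xE i * fb i = (σ * σ) * (γ * (r * f)) * (ee i * ee i) := by
      intro i; rw [hxE_i, hfb_i]; ring
    rw [vDot, Finset.sum_congr rfl fun i _ => this i, ← Finset.mul_sum, hsum, hσσ]
    ring
  have hee0 : ee j0 = (Real.sqrt 2)⁻¹ := by rw [hee_apply]; simp [hne]
  have hee1 : ee j1 = (Real.sqrt 2)⁻¹ := by rw [hee_apply]; simp [hne.symm]
  have hcross : xE j0 * fb j1 + xE j1 * fb j0 = γ * (r * f) := by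
    rw [hxE_i, hfb_i, hxE_i, hfb_i, hee0, hee1]
    linear_combination (2*σ*σ*γ*r*f) * hinv2 + (γ*r*f) * hσσ
  have hxx : xE j0 * xE j1 = r ^ 2 / 2 := by
    rw [hxE_i, hxE_i, hee0, hee1]
    linear_combination (σ*σ*γ*γ*r^2) * hinv2 + (γ*γ*r^2/2) * hσσ + (r^2/2) * hγγ
  -- rpow facts
  have hA : r ^ (-(d:ℝ) - 2) = (r ^ (d + 2) : ℝ)⁻¹ := by
    rw [show -(d:ℝ) - 2 = -(((d:ℕ) + 2 : ℕ) : ℝ) by push_cast; ring,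
      Real.rpow_neg hr0.le, Real.rpow_natCast]
  have hC : r ^ (-(d:ℝ)) = (r ^ d : ℝ)⁻¹ := by
    rw [show -(d:ℝ) = -(((d:ℕ) : ℕ) : ℝ) by push_cast; ring,
      Real.rpow_neg hr0.le, Real.rpow_natCast]
  have hB : r ^ (-2:ℝ) = (r ^ 2 : ℝ)⁻¹ := by
    rw [show (-2:ℝ) = -((2:ℕ) : ℝ) by norm_num,
      Real.rpow_neg hr0.le, Real.rpow_natCast]
  have hrne : r ≠ 0 := ne_of_gt hr0
  have hmain : EBact = γ * (s / 2) * r * f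
      * (1 - (((d : ℝ) + 2) / 2) * r ^ (-(d : ℝ)) + ((d : ℝ) / 2) * r ^ (-(d:ℝ) - 2)) := by
    rw [hEB, hcross, hxx, hvdot, hA, hB, hC]
    field_simp
    ring
  refine ⟨hmain, ?_, ?_⟩
  all_goals {
    intro hγval
    set u : ℝ := r⁻¹ with hu
    have hu0 : 0 < u := inv_pos.mpr hr0
    have hu1 : u < 1 := inv_lt_one_of_one_lt₀ hxE
    have hbr : (1 : ℝ) - (((d : ℝ) + 2) / 2) * r ^ (-(d : ℝ))
        + ((d : ℝ) / 2) * r ^ (-(d:ℝ) - 2)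
        = (2⁻¹ : ℝ) * (2 - ((d:ℝ)+2) * u ^ d + (d:ℝ) * u ^ (d+2)) := by
      rw [hA, hC, hu, ← inv_pow, ← inv_pow]
      ring
    have hbrpos := statement_19_auxpos d hd u hu0 hu1
    have hpos : 0 < (s / 2) * r * f
        * (1 - (((d : ℝ) + 2) / 2) * r ^ (-(d : ℝ))
          + ((d : ℝ) / 2) * r ^ (-(d:ℝ) - 2)) := by
      rw [hbr]
      positivity
    rw [hmain, hγval]
    · linarith
  }


end ActiveSuspension
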